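/- arXiv:1312.1863 — 3 statements merged into one kernel-verified Lean document; each statement's English description precedes it below -/
import Mathlib

section
/- Let H be a complex Hilbert space, let A₀ and A₁ be densely defined closed linear operators in H with A₀ ⊆ A₁ (graph inclusion) and let x₁ ∈ D(A₁) \ D(A₀). Let (yₙ)ₙ∈ℕ be a linearly independent sequence in H with yₙ → 0. On H ⊕ H define the linear operator A with domain D(A) := {(x₀, 0) : x₀ ∈ D(A₀)} + span{(x₁, yₙ) : n ∈ ℕ} by A(x, y) := A₁x, and define B : H → H ⊕ H, Bx := (x, 0). Then: (i) {x ∈ H : (x, 0) ∈ D(A)} = D(A₀), so that A∘B = A₀; and (ii) the point ((x₁, 0), A₁x₁) lies in the closure of the graph of A in (H ⊕ H) ⊕ H. In particular, x₁ belongs to the domain of the graph-closure of A composed with B, but x₁ ∉ D(closure(A∘B)) = D(A₀). -/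
/-!
Linear independence of `(yₙ)` forces the span component of any `(x, 0) ∈ D(A)` to vanish,
so `x ∈ D(A₀)`; on the other hand the graph points `((x₁, yₙ), A₁ x₁)` converge to
`((x₁, 0), A₁ x₁)` because `yₙ → 0`.
-/

noncomputable section

open Filter Topology

variable {H : Type*} [NormedAddCommGroup H] [InnerProductSpace ℂ H] [CompleteSpace H]

namespace Submodule

variable {R M N ι : Type*} [Ring R] [AddCommGroup M] [Module R M] [AddCommGroup N] [Module R N]

theorem eq_zero_of_mem_span_range_prod_of_snd_eq_zero {u : ι → M} {v : ι → N}
    (hv : LinearIndependent R v) {b : M × N} (hb : b ∈ span R (Set.range fun i => (u i, v i)))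
    (hb₂ : b.2 = 0) : b = 0 := by
  obtain ⟨c, rfl⟩ := Finsupp.mem_span_range_iff_exists_finsupp.mp hb
  have hcv : (c.sum fun i a => a • v i) = 0 := by
    simpa [Finsupp.sum, Prod.snd_sum] using hb₂
  have hc : c = 0 := linearIndependent_iff.mp hv c (by rwa [Finsupp.linearCombination_apply])
  simp [hc]

theorem prod_mk_zero_mem_map_inl_sup_span_iff {p : Submodule R M} {u : ι → M} {v : ι → N}
    (hv : LinearIndependent R v) (x : M) :
    (x, (0 : N)) ∈ p.map (LinearMap.inl R M N) ⊔ span R (Set.range fun i => (u i, v i)) ↔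
      x ∈ p := by
  refine ⟨fun hx => ?_, fun hx => mem_sup_left (mem_map_of_mem hx)⟩
  obtain ⟨_, ⟨x₀, hx₀, rfl⟩, b, hb, hsum⟩ := mem_sup.mp hx
  obtain rfl : b = 0 :=
    eq_zero_of_mem_span_range_prod_of_snd_eq_zero hv hb (by simpa using congrArg Prod.snd hsum)
  obtain rfl : x₀ = x := by simpa using congrArg Prod.fst hsum
  exact hx₀

end Submodule

theorem counterexample_closure_comp_general
    (A₀ A₁ : H →ₗ.[ℂ] H)
    (x₁ : H) (hx₁ : x₁ ∈ A₁.domain)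
    (y : ℕ → H) (hy : LinearIndependent ℂ y) (hy0 : Tendsto y atTop (𝓝 (0 : H))) :
    (∀ x : H, (x, (0 : H)) ∈
        (A₀.domain.map (LinearMap.inl ℂ H H) ⊔
          Submodule.span ℂ (Set.range fun n => (x₁, y n))) ↔ x ∈ A₀.domain) ∧
      ((x₁, (0 : H)), A₁ ⟨x₁, hx₁⟩) ∈
        closure {q : (H × H) × H |
          q.1 ∈ (A₀.domain.map (LinearMap.inl ℂ H H) ⊔
            Submodule.span ℂ (Set.range fun n => (x₁, y n))) ∧
          ∃ h : q.1.1 ∈ A₁.domain, q.2 = A₁ ⟨q.1.1, h⟩} := by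
  refine ⟨Submodule.prod_mk_zero_mem_map_inl_sup_span_iff (u := fun _ => x₁) hy, ?_⟩
  refine mem_closure_of_tendsto ((tendsto_const_nhds.prodMk_nhds hy0).prodMk_nhds
    tendsto_const_nhds) (Eventually.of_forall fun n => ?_)
  exact ⟨Submodule.mem_sup_right (Submodule.subset_span ⟨n, rfl⟩), hx₁, rfl⟩

/-- Epperlein–Vogt counterexample. Let `A₀ ⊆ A₁` be densely defined
closed operators in `H`, `x₁ ∈ D(A₁) \ D(A₀)`, and `(yₙ)` a linearly independent
sequence with `yₙ → 0`. Consider the operator `A` on `H ⊕ H` with domain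
`D(A) = (D(A₀) × {0}) + span {(x₁, yₙ) : n ∈ ℕ}`, acting by `A(x, y) = A₁ x`, and
`B : H → H ⊕ H`, `Bx = (x, 0)`. Then (i) `{x : (x,0) ∈ D(A)} = D(A₀)`, so that
`A ∘ B = A₀`, and (ii) `((x₁, 0), A₁ x₁)` lies in the closure of the graph of `A`. -/
theorem counterexample_closure_comp
    (A₀ A₁ : H →ₗ.[ℂ] H)
    (hA₀d : Dense (A₀.domain : Set H)) (hA₀c : A₀.IsClosed)
    (hA₁d : Dense (A₁.domain : Set H)) (hA₁c : A₁.IsClosed)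
    (hle : A₀ ≤ A₁)
    (x₁ : H) (hx₁ : x₁ ∈ A₁.domain) (hx₁' : x₁ ∉ A₀.domain)
    (y : ℕ → H) (hy : LinearIndependent ℂ y) (hy0 : Tendsto y atTop (𝓝 (0 : H))) :
    (∀ x : H, (x, (0 : H)) ∈
        (A₀.domain.map (LinearMap.inl ℂ H H) ⊔
          Submodule.span ℂ (Set.range fun n => (x₁, y n))) ↔ x ∈ A₀.domain) ∧
      ((x₁, (0 : H)), A₁ ⟨x₁, hx₁⟩) ∈
        closure {q : (H × H) × H |
          q.1 ∈ (A₀.domain.map (LinearMap.inl ℂ H H) ⊔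
            Submodule.span ℂ (Set.range fun n => (x₁, y n))) ∧
          ∃ h : q.1.1 ∈ A₁.domain, q.2 = A₁ ⟨q.1.1, h⟩} :=
  counterexample_closure_comp_general A₀ A₁ x₁ hx₁ y hy hy0
end
end

section
/- Let μ, α, λ ∈ ℝ and define the linear operator C on M₃ by C := 2μ·sym₀ + 2α·skew + (3λ+2μ)·ℙ. Then C is selfadjoint with respect to the Frobenius inner product, and C is strictly positive definite if and only if μ > 0, α > 0 and λ + (2/3)μ > 0. -/
noncomputable section

open Matrix

/-- The space of real `3 × 3` matrices. -/
abbrev M3 : Type := Matrix (Fin 3) (Fin 3) ℝ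

/-- The Frobenius inner product `⟨σ, τ⟩ = trace (σᵀ * τ)` on `M3`. -/
def finner (σ τ : M3) : ℝ := (σᵀ * τ).trace

/-- The symmetric part map `sym τ = (τ + τᵀ)/2`. -/
def symM : M3 →ₗ[ℝ] M3 :=
  (2 : ℝ)⁻¹ • (LinearMap.id + (Matrix.transposeLinearEquiv (Fin 3) (Fin 3) ℝ ℝ).toLinearMap)

/-- The skew-symmetric part map `skew τ = (τ - τᵀ)/2`. -/
def skewM : M3 →ₗ[ℝ] M3 :=
  (2 : ℝ)⁻¹ • (LinearMap.id - (Matrix.transposeLinearEquiv (Fin 3) (Fin 3) ℝ ℝ).toLinearMap)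

/-- The volumetric (pressure) part `ℙ τ = (trace τ / 3) • I`. -/
def volP : M3 →ₗ[ℝ] M3 :=
  (Matrix.traceLinearMap (Fin 3) ℝ ℝ).smulRight ((3 : ℝ)⁻¹ • (1 : M3))

/-- The trace-free symmetric part `sym₀ = sym - ℙ`. -/
def sym0 : M3 →ₗ[ℝ] M3 := symM - volP

/-!
The maps `sym₀`, `skew` and `ℙ` are idempotents, self-adjoint for the Frobenius form, that sum
to the identity; hence they are mutually orthogonal projections and
`⟨τ, C τ⟩ = 2μ ‖sym₀ τ‖² + 2α ‖skew τ‖² + (3λ + 2μ) ‖ℙ τ‖²`. As none of the three projections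
vanishes, this form is positive definite exactly when the three coefficients are positive.
-/

namespace LinearMap

variable {R E ι : Type*} [CommRing R] [AddCommGroup E] [Module R E]
  {B : LinearMap.BilinForm R E}

theorem IsSelfAdjoint.apply_apply_self_of_isIdempotentElem {P : Module.End R E}
    (hP : B.IsSelfAdjoint P) (hP' : IsIdempotentElem P) (x : E) :
    B x (P x) = B (P x) (P x) := by
  rw [hP, ← Module.End.mul_apply, hP'.eq]

theorem apply_sum_smul_apply_of_isSelfAdjoint [Fintype ι] {P : ι → Module.End R E}
    (hP : ∀ i, B.IsSelfAdjoint (P i)) (hP' : ∀ i, IsIdempotentElem (P i)) (c : ι → R) (x : E) :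
    B x ((∑ i, c i • P i) x) = ∑ i, c i * B (P i x) (P i x) := by
  simp only [sum_apply, smul_apply, map_sum, map_smul, smul_eq_mul,
    (hP _).apply_apply_self_of_isIdempotentElem (hP' _)]

variable [LinearOrder R]

theorem apply_self_nonneg_of_pos (hB : ∀ x, x ≠ 0 → 0 < B x x) (x : E) : 0 ≤ B x x := by
  rcases eq_or_ne x 0 with rfl | hx
  · simp
  · exact (hB x hx).le

variable [IsStrictOrderedRing R] [Fintype ι] {P : ι → Module.End R E}

/-- In `B x x = ∑ j, B (P j x) (P j x)` the `i`-th term is already `B x x` when `P i x = x`. -/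
theorem apply_eq_zero_of_apply_eq_self (hB : ∀ x, x ≠ 0 → 0 < B x x)
    (hP : ∀ i, B.IsSelfAdjoint (P i)) (hP' : ∀ i, IsIdempotentElem (P i)) (hsum : ∑ i, P i = 1)
    {i j : ι} (hij : j ≠ i) {x : E} (hx : P i x = x) : P j x = 0 := by
  classical
  have hdecomp := apply_sum_smul_apply_of_isSelfAdjoint hP hP' 1 x
  simp only [Pi.one_apply, one_smul, one_mul, hsum, Module.End.one_apply,
    ← Finset.add_sum_erase _ _ (Finset.mem_univ i), hx, left_eq_add] at hdecomp
  have := (Finset.sum_eq_zero_iff_of_nonneg fun k _ ↦ apply_self_nonneg_of_pos hB (P k x)).mp hdecomp j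
    (Finset.mem_erase.mpr ⟨hij, Finset.mem_univ j⟩)
  by_contra h
  exact (hB _ h).ne' this

theorem posDef_sum_smul_iff (hB : ∀ x, x ≠ 0 → 0 < B x x)
    (hP : ∀ i, B.IsSelfAdjoint (P i)) (hP' : ∀ i, IsIdempotentElem (P i)) (hsum : ∑ i, P i = 1)
    (hne : ∀ i, P i ≠ 0) (c : ι → R) :
    (∀ x, x ≠ 0 → 0 < B x ((∑ i, c i • P i) x)) ↔ ∀ i, 0 < c i := by
  classical
  constructor
  · intro hpos i
    obtain ⟨y, hy⟩ : ∃ y, P i y ≠ 0 := by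
      by_contra! h
      exact hne i (LinearMap.ext h)
    have hfix : P i (P i y) = P i y := by rw [← Module.End.mul_apply, (hP' i).eq]
    have := hpos _ hy
    rw [apply_sum_smul_apply_of_isSelfAdjoint hP hP', Finset.sum_eq_single i] at this
    · rw [hfix] at this
      exact pos_of_mul_pos_left this (hB _ hy).le
    · intro j _ hj
      simp [apply_eq_zero_of_apply_eq_self hB hP hP' hsum hj hfix]
    · simp
  · intro hc x hx
    obtain ⟨i, hi⟩ : ∃ i, P i x ≠ 0 := by
      by_contra! h
      apply hx
      rw [← Module.End.one_apply (R := R) x, ← hsum, sum_apply]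
      exact Finset.sum_eq_zero fun i _ ↦ h i
    rw [apply_sum_smul_apply_of_isSelfAdjoint hP hP']
    exact Finset.sum_pos' (fun j _ ↦ mul_nonneg (hc j).le (apply_self_nonneg_of_pos hB _))
      ⟨i, Finset.mem_univ i, mul_pos (hc i) (hB _ hi)⟩

end LinearMap

def frobeniusForm : LinearMap.BilinForm ℝ M3 :=
  LinearMap.mk₂ ℝ finner
    (fun _ _ _ ↦ by simp [finner, Matrix.add_mul])
    (fun _ _ _ ↦ by simp [finner])
    (fun _ _ _ ↦ by simp [finner, Matrix.mul_add])
    (fun _ _ _ ↦ by simp [finner])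

@[simp]
theorem frobeniusForm_apply (σ τ : M3) : frobeniusForm σ τ = finner σ τ := rfl

theorem finner_self_pos {τ : M3} (hτ : τ ≠ 0) : 0 < finner τ τ :=
  (posSemidef_conjTranspose_mul_self τ).trace_nonneg.lt_of_ne'
    (trace_conjTranspose_mul_self_eq_zero_iff.not.mpr hτ)

theorem finner_transpose_left (σ τ : M3) : finner σᵀ τ = finner σ τᵀ := by
  rw [finner, finner, transpose_transpose, ← transpose_mul, trace_transpose, trace_mul_comm]

theorem symM_apply (τ : M3) : symM τ = (2 : ℝ)⁻¹ • (τ + τᵀ) := by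
  simp [symM, transposeLinearEquiv]

theorem skewM_apply (τ : M3) : skewM τ = (2 : ℝ)⁻¹ • (τ - τᵀ) := by
  simp [skewM, transposeLinearEquiv]

theorem volP_apply (τ : M3) : volP τ = ((3 : ℝ)⁻¹ * τ.trace) • (1 : M3) := by
  simp [volP, smul_smul, mul_comm]

theorem isSelfAdjoint_symM : frobeniusForm.IsSelfAdjoint symM := fun σ τ ↦ by
  simp only [symM_apply, map_smul, map_add, LinearMap.add_apply, LinearMap.smul_apply,
    frobeniusForm_apply, finner_transpose_left]

theorem isSelfAdjoint_skewM : frobeniusForm.IsSelfAdjoint skewM := fun σ τ ↦ by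
  simp only [skewM_apply, map_smul, map_sub, LinearMap.sub_apply, LinearMap.smul_apply,
    frobeniusForm_apply, finner_transpose_left]

theorem isSelfAdjoint_volP : frobeniusForm.IsSelfAdjoint volP := fun σ τ ↦ by
  simp [volP_apply, finner]
  ring

theorem isSelfAdjoint_sym0 : frobeniusForm.IsSelfAdjoint sym0 :=
  isSelfAdjoint_symM.sub isSelfAdjoint_volP

theorem isIdempotentElem_skewM : IsIdempotentElem skewM := by
  ext τ : 1
  simp [skewM_apply]
  module

theorem isIdempotentElem_volP : IsIdempotentElem volP := by
  ext τ : 1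
  simp [volP_apply]

theorem isIdempotentElem_sym0 : IsIdempotentElem sym0 := by
  ext τ : 1
  simp [sym0, symM_apply, volP_apply]
  module

theorem sym0_add_skewM_add_volP : sym0 + skewM + volP = 1 := by
  ext τ : 1
  simp [sym0, symM_apply, skewM_apply]
  module

theorem sym0_ne_zero : sym0 ≠ 0 := fun h ↦ by
  simpa [sym0, symM_apply, volP_apply] using congr($h (single 0 1 1) 0 1)

theorem skewM_ne_zero : skewM ≠ 0 := fun h ↦ by
  simpa [skewM_apply] using congr($h (single 0 1 1) 0 1)

theorem volP_ne_zero : volP ≠ 0 := fun h ↦ by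
  simpa [volP_apply] using congr($h 1 0 0)

/-- For `C := 2μ·sym₀ + 2α·skew + (3λ+2μ)·ℙ` on `M3`: `C` is
selfadjoint for the Frobenius inner product, and `C` is strictly positive definite
iff `μ > 0`, `α > 0` and `λ + (2/3)μ > 0`. -/
theorem isotropic_elasticity_tensor_posDef_iff (μ α lam : ℝ) :
    (∀ σ τ : M3,
        finner (((2 * μ) • sym0 + (2 * α) • skewM + (3 * lam + 2 * μ) • volP) σ) τ =
          finner σ (((2 * μ) • sym0 + (2 * α) • skewM + (3 * lam + 2 * μ) • volP) τ)) ∧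
      ((∀ τ : M3, τ ≠ 0 →
          0 < finner τ (((2 * μ) • sym0 + (2 * α) • skewM + (3 * lam + 2 * μ) • volP) τ)) ↔
        (0 < μ ∧ 0 < α ∧ 0 < lam + (2 / 3) * μ)) := by
  refine ⟨((isSelfAdjoint_sym0.smul _).add (isSelfAdjoint_skewM.smul _)).add
    (isSelfAdjoint_volP.smul _), ?_⟩
  let P : Fin 3 → Module.End ℝ M3 := ![sym0, skewM, volP]
  let c : Fin 3 → ℝ := ![2 * μ, 2 * α, 3 * lam + 2 * μ]
  have hC : (2 * μ) • sym0 + (2 * α) • skewM + (3 * lam + 2 * μ) • volP = ∑ i, c i • P i := by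
    simp [Fin.sum_univ_three, c, P]
  have hsum : ∑ i, P i = 1 := by
    simp [Fin.sum_univ_three, P, sym0_add_skewM_add_volP]
  rw [hC]
  refine (LinearMap.posDef_sum_smul_iff (B := frobeniusForm) (fun _ ↦ finner_self_pos)
    (by simp [Fin.forall_fin_succ, P, isSelfAdjoint_sym0, isSelfAdjoint_skewM, isSelfAdjoint_volP])
    (by simp [Fin.forall_fin_succ, P, isIdempotentElem_sym0, isIdempotentElem_skewM,
      isIdempotentElem_volP]) hsum
    (by simp [Fin.forall_fin_succ, P, sym0_ne_zero, skewM_ne_zero, volP_ne_zero]) c).trans ?_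
  simp only [Fin.forall_fin_succ, IsEmpty.forall_iff, and_true, c, Matrix.cons_val_zero,
    Matrix.cons_val_succ, Nat.ofNat_pos, mul_pos_iff_of_pos_left]
  exact and_congr_right' (and_congr_right' ⟨fun _ ↦ by linarith, fun _ ↦ by linarith⟩)
end
end

section
/- Let H₀, H₁ be complex Hilbert spaces, let C₀ ∈ L(H₀) be selfadjoint, strictly positive definite and boundedly invertible, let E ∈ L(H₀, H₁), and let C₂ ∈ L(H₁) be selfadjoint. Then the block operator [[C₀, E*], [E, C₂]] on H₀ ⊕ H₁ is strictly positive definite if and only if the Schur complement C₂ − E C₀⁻¹ E* ∈ L(H₁) is strictly positive definite. -/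
/-!
Writing `K = C₀⁻¹ E*` and completing the square, the block form becomes
`⟪x + K y, C₀ (x + K y)⟫ + ⟪y, (C₂ - E C₀⁻¹ E*) y⟫`. Taking `x = -K y` kills the first term,
which gives one direction. Conversely the first term is coercive in `x + K y`, and the shear
`(x, y) ↦ (x + K y, y)` distorts `‖x‖² + ‖y‖²` by at most the factor `2 (1 + ‖K‖²)`.
-/

noncomputable section

variable {H₀ H₁ : Type*}
  [NormedAddCommGroup H₀] [InnerProductSpace ℂ H₀] [CompleteSpace H₀]
  [NormedAddCommGroup H₁] [InnerProductSpace ℂ H₁] [CompleteSpace H₁]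

open scoped InnerProductSpace

section Shear

variable {𝕜 E F : Type*} [NontriviallyNormedField 𝕜]
  [SeminormedAddCommGroup E] [NormedSpace 𝕜 E] [SeminormedAddCommGroup F] [NormedSpace 𝕜 F]

theorem norm_sq_add_norm_sq_le_of_shear (K : F →L[𝕜] E) (x : E) (y : F) :
    ‖x‖ ^ 2 + ‖y‖ ^ 2 ≤ 2 * (1 + ‖K‖ ^ 2) * (‖x + K y‖ ^ 2 + ‖y‖ ^ 2) := by
  have hx : ‖x‖ ≤ ‖x + K y‖ + ‖K‖ * ‖y‖ :=
    calc ‖x‖ = ‖(x + K y) - K y‖ := by rw [add_sub_cancel_right]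
      _ ≤ ‖x + K y‖ + ‖K y‖ := norm_sub_le _ _
      _ ≤ ‖x + K y‖ + ‖K‖ * ‖y‖ := by gcongr; exact K.le_opNorm y
  have hx2 : ‖x‖ ^ 2 ≤ 2 * ‖x + K y‖ ^ 2 + 2 * (‖K‖ * ‖y‖) ^ 2 := by
    nlinarith [norm_nonneg x, sq_nonneg (‖x + K y‖ - ‖K‖ * ‖y‖)]
  nlinarith [sq_nonneg ‖K‖, sq_nonneg ‖y‖, sq_nonneg ‖x + K y‖, sq_nonneg (‖K‖ * ‖y‖)]

end Shear

section SchurComplement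

variable {𝕜 E F : Type*} [RCLike 𝕜]
  [NormedAddCommGroup E] [InnerProductSpace 𝕜 E] [NormedAddCommGroup F] [InnerProductSpace 𝕜 F]

theorem LinearMap.IsSymmetric.inner_apply_rightInverse {A B : E →ₗ[𝕜] E} (hA : A.IsSymmetric)
    (hAB : Function.RightInverse B A) (v w : E) : ⟪B v, A w⟫_𝕜 = ⟪v, w⟫_𝕜 := by
  rw [← hA, hAB]

theorem LinearMap.IsSymmetric.of_rightInverse {A B : E →ₗ[𝕜] E} (hA : A.IsSymmetric)
    (hAB : Function.RightInverse B A) : B.IsSymmetric := fun v w => by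
  rw [← hA.inner_apply_rightInverse hAB v (B w), hAB]

variable [CompleteSpace E] [CompleteSpace F]

theorem inner_block_eq_inner_add_inner_schur {A B : E →L[𝕜] E}
    (hA : (A : E →ₗ[𝕜] E).IsSymmetric) (hAB : Function.RightInverse B A)
    (D : E →L[𝕜] F) (C : F →L[𝕜] F) (x : E) (y : F) :
    ⟪x, A x + D.adjoint y⟫_𝕜 + ⟪y, D x + C y⟫_𝕜 =
      ⟪x + B (D.adjoint y), A (x + B (D.adjoint y))⟫_𝕜 +
        ⟪y, (C - D.comp (B.comp D.adjoint)) y⟫_𝕜 := by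
  have hB : (B : E →ₗ[𝕜] E).IsSymmetric := hA.of_rightInverse hAB
  have hBA : ∀ v w, ⟪B v, A w⟫_𝕜 = ⟪v, w⟫_𝕜 := hA.inner_apply_rightInverse hAB
  simp only [map_add, inner_add_left, inner_add_right, sub_apply,
    inner_sub_right, ContinuousLinearMap.comp_apply, hAB _, hBA,
    ← ContinuousLinearMap.adjoint_inner_left D]
  rw [← ContinuousLinearMap.coe_coe B, hB]
  ring

end SchurComplement

theorem block_posDef_iff_schur_posDef_general
    (C₀ : H₀ →L[ℂ] H₀) (hC₀sa : IsSelfAdjoint C₀)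
    (hC₀pos : ∃ c : ℝ, 0 < c ∧ ∀ x : H₀, c * ‖x‖ ^ 2 ≤ (inner ℂ x (C₀ x) : ℂ).re)
    (C₀inv : H₀ →L[ℂ] H₀)
    (hC₀₁ : C₀.comp C₀inv = ContinuousLinearMap.id ℂ H₀)
    (E : H₀ →L[ℂ] H₁) (C₂ : H₁ →L[ℂ] H₁) :
    (∃ c : ℝ, 0 < c ∧ ∀ (x : H₀) (y : H₁),
        c * (‖x‖ ^ 2 + ‖y‖ ^ 2) ≤
          ((inner ℂ x (C₀ x + ContinuousLinearMap.adjoint E y) : ℂ) +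
            (inner ℂ y (E x + C₂ y) : ℂ)).re) ↔
      (∃ c : ℝ, 0 < c ∧ ∀ y : H₁,
        c * ‖y‖ ^ 2 ≤
          (inner ℂ y ((C₂ - E.comp (C₀inv.comp (ContinuousLinearMap.adjoint E))) y) : ℂ).re) := by
  set K := C₀inv.comp E.adjoint
  have hsquare := inner_block_eq_inner_add_inner_schur hC₀sa.isSymmetric
    (fun v => congr($hC₀₁ v)) E C₂
  simp only [hsquare, Complex.add_re]
  constructor
  · rintro ⟨c, hc, hblock⟩
    refine ⟨c, hc, fun y => ?_⟩
    have := hblock (-K y) y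
    simp only [K, ContinuousLinearMap.comp_apply, neg_add_cancel, map_zero, inner_zero_left,
      Complex.zero_re, zero_add] at this
    nlinarith [sq_nonneg ‖-K y‖]
  · rintro ⟨cS, hcS, hschur⟩
    obtain ⟨c₀, hc₀, hC₀⟩ := hC₀pos
    refine ⟨min c₀ cS / (2 * (1 + ‖K‖ ^ 2)), by positivity, fun x y => ?_⟩
    calc min c₀ cS / (2 * (1 + ‖K‖ ^ 2)) * (‖x‖ ^ 2 + ‖y‖ ^ 2)
        ≤ min c₀ cS / (2 * (1 + ‖K‖ ^ 2)) * (2 * (1 + ‖K‖ ^ 2) * (‖x + K y‖ ^ 2 + ‖y‖ ^ 2)) := by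
          gcongr; exact norm_sq_add_norm_sq_le_of_shear K x y
      _ = min c₀ cS * ‖x + K y‖ ^ 2 + min c₀ cS * ‖y‖ ^ 2 := by field_simp
      _ ≤ c₀ * ‖x + K y‖ ^ 2 + cS * ‖y‖ ^ 2 := by gcongr <;> simp
      _ ≤ _ := add_le_add (hC₀ _) (hschur y)

/-- If `C₀` is selfadjoint, strictly positive definite and boundedly
invertible and `C₂` is selfadjoint, then the block operator `[[C₀, E*], [E, C₂]]` on
`H₀ ⊕ H₁` is strictly positive definite iff the Schur complement `C₂ − E C₀⁻¹ E*` is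
strictly positive definite. -/
theorem block_posDef_iff_schur_posDef
    (C₀ : H₀ →L[ℂ] H₀) (hC₀sa : IsSelfAdjoint C₀)
    (hC₀pos : ∃ c : ℝ, 0 < c ∧ ∀ x : H₀, c * ‖x‖ ^ 2 ≤ (inner ℂ x (C₀ x) : ℂ).re)
    (C₀inv : H₀ →L[ℂ] H₀)
    (hC₀₁ : C₀.comp C₀inv = ContinuousLinearMap.id ℂ H₀)
    (hC₀₂ : C₀inv.comp C₀ = ContinuousLinearMap.id ℂ H₀)
    (E : H₀ →L[ℂ] H₁) (C₂ : H₁ →L[ℂ] H₁) (hC₂sa : IsSelfAdjoint C₂) :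
    (∃ c : ℝ, 0 < c ∧ ∀ (x : H₀) (y : H₁),
        c * (‖x‖ ^ 2 + ‖y‖ ^ 2) ≤
          ((inner ℂ x (C₀ x + ContinuousLinearMap.adjoint E y) : ℂ) +
            (inner ℂ y (E x + C₂ y) : ℂ)).re) ↔
      (∃ c : ℝ, 0 < c ∧ ∀ y : H₁,
        c * ‖y‖ ^ 2 ≤
          (inner ℂ y ((C₂ - E.comp (C₀inv.comp (ContinuousLinearMap.adjoint E))) y) : ℂ).re) :=
  block_posDef_iff_schur_posDef_general C₀ hC₀sa hC₀pos C₀inv hC₀₁ E C₂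
end
end
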